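/- With V, h, J_l as above, let e_P (for nonempty P ⊆ {1,…,r} with chosen p ∈ P) be the idempotent operator on ⊗_ℝ^r V built from the J_l. Then (⊗_ℝ^r V)·e_P = {x ∈ ⊗_ℝ^r V : x J_q = x J_p for all q ∈ P, and x J_q = -x J_p for all q ∉ P}. -/

import Mathlib

/-!
Since the `J_l` commute and square to `-1`, one has `(J_q - J_p)(1 - J_p J_q) = 0` and
`(J_q + J_p)(1 + J_p J_q) = 0`; as the factors of `e_P` commute, every vector in the range of
`e_P` satisfies the stated relations. Conversely, on a vector satisfying them each factor
`1 ∓ J_p J_q` acts as multiplication by `2`, and there are exactly `r - 1` factors, so `e_P`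
fixes it.
-/

open scoped TensorProduct
open PiTensorProduct

variable (V : Type*) [AddCommGroup V] [Module ℂ V] [Module ℝ V] [IsScalarTower ℝ ℂ V]

/-- Multiplication by `i` on `V`, as an `ℝ`-linear map. -/
noncomputable def mulI : V →ₗ[ℝ] V :=
  (Complex.I • (LinearMap.id : V →ₗ[ℂ] V)).restrictScalars ℝ

variable (r : ℕ)

/-- The operator `J_l` on `⨂[ℝ]^r V` applying multiplication by `i` in the `l`-th slot. -/
noncomputable def Jop (l : Fin r) : Module.End ℝ (⨂[ℝ] _ : Fin r, V) :=
  PiTensorProduct.map (fun i => if i = l then mulI V else LinearMap.id)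

/-- The diagonal action of `g ∈ GL_ℂ(V)` on `⨂[ℝ]^r V`. -/
noncomputable def diag (g : V ≃ₗ[ℂ] V) : Module.End ℝ (⨂[ℝ] _ : Fin r, V) :=
  PiTensorProduct.map (fun _ => g.toLinearMap.restrictScalars ℝ)

lemma Jop_comm (l m : Fin r) : Commute (Jop V r l) (Jop V r m) := by
  show _ * _ = _ * _
  rw [Module.End.mul_eq_comp, Module.End.mul_eq_comp]
  unfold Jop
  rw [← PiTensorProduct.map_comp, ← PiTensorProduct.map_comp]
  congr 1
  funext i
  split_ifs <;> simp

noncomputable def eP {A : Type*} [Ring A] [Algebra ℝ A] {r : ℕ} (J : Fin r → A)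
    (hcomm : ∀ l m, Commute (J l) (J m)) (P : Finset (Fin r)) (p : Fin r) : A :=
  (((2 : ℝ) ^ (r - 1))⁻¹) •
    ((P.erase p).noncommProd (fun q => 1 - J p * J q) (by
        intro a _ b _ _
        have h : Commute (J p * J a) (J p * J b) :=
          ((hcomm p p).mul_right (hcomm p b)).mul_left ((hcomm a p).mul_right (hcomm a b))
        exact (Commute.one_left (1 - J p * J b)).sub_left
          ((Commute.one_right (J p * J a)).sub_right h)) *
     (Pᶜ).noncommProd (fun q => 1 + J p * J q) (by
        intro a _ b _ _
        have h : Commute (J p * J a) (J p * J b) :=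
          ((hcomm p p).mul_right (hcomm p b)).mul_left ((hcomm a p).mul_right (hcomm a b))
        exact (Commute.one_left (1 + J p * J b)).add_left
          ((Commute.one_right (J p * J a)).add_right h)))

theorem Finset.noncommProd_apply_eq_pow_smul {ι R M : Type*} [CommSemiring R]
    [AddCommMonoid M] [Module R M] (s : Finset ι) (f : ι → Module.End R M) (comm) (c : R)
    {x : M} (hx : ∀ i ∈ s, f i x = c • x) :
    s.noncommProd f comm x = c ^ s.card • x := by
  classical
  induction s using Finset.induction_on with
  | empty => simp
  | insert a s ha ih =>
    rw [Finset.noncommProd_insert_of_notMem _ _ _ _ ha, Module.End.mul_apply,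
      ih _ fun i hi => hx i (Finset.mem_insert_of_mem hi), map_smul,
      hx a (Finset.mem_insert_self a s), Finset.card_insert_of_notMem ha, smul_smul, pow_succ]

theorem Finset.mul_noncommProd_eq_zero {ι β : Type*} [MonoidWithZero β] {s : Finset ι}
    {f : ι → β} (comm) {a : ι} (ha : a ∈ s) {g : β} (hg : g * f a = 0) :
    g * s.noncommProd f comm = 0 := by
  classical
  rw [← Finset.mul_noncommProd_erase s ha, ← mul_assoc, hg, zero_mul]

section SquareMinusOne

variable {A : Type*} [Ring A] {a b : A}

theorem sub_mul_one_sub_mul_eq_zero (hab : Commute a b) (ha : a * a = -1) (hb : b * b = -1) :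
    (b - a) * (1 - a * b) = 0 := by
  have hbab : b * (a * b) = -a := by rw [← mul_assoc, ← hab.eq, mul_assoc, hb, mul_neg_one]
  have haab : a * (a * b) = -b := by rw [← mul_assoc, ha, neg_one_mul]
  rw [sub_mul, mul_sub, mul_sub, mul_one, mul_one, hbab, haab]
  abel

theorem add_mul_one_add_mul_eq_zero (hab : Commute a b) (ha : a * a = -1) (hb : b * b = -1) :
    (b + a) * (1 + a * b) = 0 := by
  have hbab : b * (a * b) = -a := by rw [← mul_assoc, ← hab.eq, mul_assoc, hb, mul_neg_one]
  have haab : a * (a * b) = -b := by rw [← mul_assoc, ha, neg_one_mul]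
  rw [add_mul, mul_add, mul_add, mul_one, mul_one, hbab, haab]
  abel

end SquareMinusOne

section eP

variable {A : Type*} [Ring A] [Algebra ℝ A] {r : ℕ} {J : Fin r → A}
  (hcomm : ∀ l m, Commute (J l) (J m)) (hsq : ∀ l, J l * J l = -1)
  {P : Finset (Fin r)} {p q : Fin r}

include hsq

theorem sub_mul_eP_eq_zero (hq : q ∈ P.erase p) : (J q - J p) * eP J hcomm P p = 0 := by
  rw [eP, mul_smul_comm, ← mul_assoc]
  -- `erw`: the commutativity proofs built into `eP` have `Set.Pairwise` unfolded in their types.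
  erw [Finset.mul_noncommProd_eq_zero _ hq
      (sub_mul_one_sub_mul_eq_zero (hcomm p q) (hsq p) (hsq q)),
    zero_mul, smul_zero]

theorem add_mul_eP_eq_zero (hq : q ∉ P) : (J q + J p) * eP J hcomm P p = 0 := by
  have hcommA : ∀ c, Commute (J q + J p) ((P.erase p).noncommProd (fun a => 1 - J p * J a) c) :=
    fun c => Finset.noncommProd_commute _ _ _ _ fun a _ =>
      (Commute.one_right _).sub_right
        (((hcomm q p).mul_right (hcomm q a)).add_left ((hcomm p p).mul_right (hcomm p a)))
  rw [eP, mul_smul_comm]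
  erw [(hcommA _).left_comm, Finset.mul_noncommProd_eq_zero _ (Finset.mem_compl.mpr hq)
      (add_mul_one_add_mul_eq_zero (hcomm p q) (hsq p) (hsq q)),
    mul_zero, smul_zero]

end eP

theorem mulI_mulI {V : Type*} [AddCommGroup V] [Module ℂ V] [Module ℝ V]
    [IsScalarTower ℝ ℂ V] (v : V) : mulI V (mulI V v) = -v := by
  simp only [mulI, LinearMap.restrictScalars_apply, LinearMap.smul_apply, LinearMap.id_apply,
    smul_smul, Complex.I_mul_I, neg_one_smul]

theorem Jop_mul_self {V : Type*} [AddCommGroup V] [Module ℂ V] [Module ℝ V]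
    [IsScalarTower ℝ ℂ V] (r : ℕ) (l : Fin r) : Jop V r l * Jop V r l = -1 := by
  ext v
  have hslot : (fun i => (if i = l then mulI V else LinearMap.id)
      ((if i = l then mulI V else LinearMap.id) (v i))) = Function.update v l (-v l) := by
    funext i
    by_cases h : i = l
    · subst h; simp [mulI_mulI]
    · simp [h]
  simp only [LinearMap.compMultilinearMap_apply, Module.End.mul_apply, Jop, map_tprod,
    LinearMap.neg_apply, Module.End.one_apply, hslot, MultilinearMap.map_update_neg,
    Function.update_eq_self]

section Module

variable {M : Type*} [AddCommGroup M] [Module ℝ M] {r : ℕ} {J : Fin r → Module.End ℝ M}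
  (hcomm : ∀ l m, Commute (J l) (J m)) (hsq : ∀ l, J l * J l = -1)
  {P : Finset (Fin r)} {p : Fin r}

include hsq

theorem eP_apply_eq_self {x : M} (hp : p ∈ P) (hxP : ∀ q ∈ P, J q x = J p x)
    (hxPc : ∀ q ∉ P, J q x = -J p x) : eP J hcomm P p x = x := by
  have hpp : J p (J p x) = -x := by simpa using LinearMap.congr_fun (hsq p) x
  have hA : ∀ q ∈ P.erase p, (1 - J p * J q) x = (2 : ℝ) • x := fun q hq => by
    rw [LinearMap.sub_apply, Module.End.mul_apply, hxP q (Finset.mem_of_mem_erase hq), hpp,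
      Module.End.one_apply, sub_neg_eq_add, two_smul]
  have hB : ∀ q ∈ Pᶜ, (1 + J p * J q) x = (2 : ℝ) • x := fun q hq => by
    rw [LinearMap.add_apply, Module.End.mul_apply, hxPc q (Finset.mem_compl.mp hq), map_neg, hpp,
      neg_neg, Module.End.one_apply, two_smul]
  have hcard : Pᶜ.card + (P.erase p).card = r - 1 := by
    have := Finset.card_erase_add_one hp
    have := Finset.card_add_card_compl P
    simp only [Fintype.card_fin] at this
    omega
  rw [eP, LinearMap.smul_apply, Module.End.mul_apply]
  erw [Finset.noncommProd_apply_eq_pow_smul _ _ _ _ hB, map_smul,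
    Finset.noncommProd_apply_eq_pow_smul _ _ _ _ hA]
  rw [smul_smul, smul_smul, mul_assoc, ← pow_add, hcard, inv_mul_cancel₀ (by positivity),
    one_smul]

theorem exists_eP_apply_eq_iff (hp : p ∈ P) (x : M) :
    (∃ y, eP J hcomm P p y = x) ↔
      (∀ q ∈ P, J q x = J p x) ∧ ∀ q ∉ P, J q x = -J p x := by
  constructor
  · rintro ⟨y, rfl⟩
    refine ⟨fun q hq => ?_, fun q hq => ?_⟩
    · rcases eq_or_ne q p with rfl | hqp
      · rfl
      · exact sub_eq_zero.mp <|
          LinearMap.congr_fun (sub_mul_eP_eq_zero hcomm hsq (Finset.mem_erase.mpr ⟨hqp, hq⟩)) y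
    · exact eq_neg_of_add_eq_zero_left <|
        LinearMap.congr_fun (add_mul_eP_eq_zero hcomm hsq (p := p) hq) y
  · rintro ⟨hxP, hxPc⟩
    exact ⟨x, eP_apply_eq_self hcomm hsq hp hxP hxPc⟩

end Module

theorem range_eP_general
    {V : Type*} [AddCommGroup V] [Module ℂ V] [Module ℝ V] [IsScalarTower ℝ ℂ V]
    (r : ℕ) (P : Finset (Fin r)) (p : Fin r) (hp : p ∈ P)
    (x : ⨂[ℝ] _ : Fin r, V) :
    (∃ y, eP (Jop V r) (Jop_comm V r) P p y = x) ↔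
      ((∀ q ∈ P, Jop V r q x = Jop V r p x) ∧
       (∀ q ∉ P, Jop V r q x = -(Jop V r p x))) :=
  exists_eP_apply_eq_iff (Jop_comm V r) (Jop_mul_self r) hp x

/-- `(⨂[ℝ]^r V)·e_P` is exactly the set of `x` with `x J_q = x J_p` for `q ∈ P`
and `x J_q = -x J_p` for `q ∉ P`. -/
theorem range_eP
    {V : Type*} [AddCommGroup V] [Module ℂ V] [Module ℝ V] [IsScalarTower ℝ ℂ V]
    (r : ℕ) (P : Finset (Fin r)) (hP : P.Nonempty) (p : Fin r) (hp : p ∈ P)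
    (x : ⨂[ℝ] _ : Fin r, V) :
    (∃ y, eP (Jop V r) (Jop_comm V r) P p y = x) ↔
      ((∀ q ∈ P, Jop V r q x = Jop V r p x) ∧
       (∀ q ∉ P, Jop V r q x = -(Jop V r p x))) :=
  range_eP_general r P p hp x
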